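/- Let ν ∈ (0,1) and m = (m_1,…,m_h) ∈ ℝ^h with m ≠ 0, and define I_MD(x; m) := sup_{θ ∈ ℝ^h} { ⟨θ, x⟩ − (⟨θ, m⟩)^{1/ν}·1_{⟨θ,m⟩ ≥ 0} } for x ∈ ℝ^h, with values in [0, ∞]. If x = c·m for some constant c ≥ 0, then I_MD(x; m) = ( ν^{ν/(1−ν)} − ν^{1/(1−ν)} )·c^{1/(1−ν)}. -/

import Mathlib

/-!
Since `m ≠ 0`, the map `θ ↦ ⟨θ, m⟩` is onto `ℝ`, so `I_MD(c m; m)` is the one-dimensional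
Legendre transform `sup_t (c t − t₊^{1/ν})`. Weighted AM–GM with weights `ν` and `1 − ν` gives
`c t ≤ t^{1/ν} + (1 − ν) s` for `t ≥ 0`, where `s = (ν^ν c)^{1/(1−ν)}`, with equality at
`t = ν^ν s^ν`; hence the supremum is attained and equals `(1 − ν) s`.
-/

open Matrix

/-- The moderate-deviation rate function
`I_MD(x; m) = sup_θ { ⟨θ, x⟩ − (⟨θ, m⟩)^{1/ν} 1_{⟨θ,m⟩ ≥ 0} }`, with the supremum
taken in the extended reals. -/
noncomputable def IMD {h : ℕ} (ν : ℝ) (m x : Fin h → ℝ) : EReal :=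
  ⨆ θ : Fin h → ℝ,
    ((dotProduct θ x -
      (if 0 ≤ dotProduct θ m then dotProduct θ m ^ (1 / ν) else 0) : ℝ) : EReal)

open Real

theorem dotProduct_left_surjective {ι R : Type*} [Fintype ι] [Field R] [LinearOrder R]
    [IsStrictOrderedRing R] {m : ι → R} (hm : m ≠ 0) :
    Function.Surjective fun θ : ι → R => θ ⬝ᵥ m := by
  have hmm : m ⬝ᵥ m ≠ 0 := mt dotProduct_self_eq_zero.mp hm
  exact fun t => ⟨(t / (m ⬝ᵥ m)) • m, by simp [smul_dotProduct, div_mul_cancel₀ _ hmm]⟩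

theorem IMD_smul_self {h : ℕ} (ν : ℝ) {m : Fin h → ℝ} (hm : m ≠ 0) (c : ℝ) :
    IMD ν m (c • m) = ⨆ t : ℝ, ((c * t - if 0 ≤ t then t ^ (1 / ν) else 0 : ℝ) : EReal) := by
  simp only [IMD, dotProduct_smul, smul_eq_mul]
  exact (dotProduct_left_surjective hm).iSup_comp
    fun t => ((c * t - if 0 ≤ t then t ^ (1 / ν) else 0 : ℝ) : EReal)

theorem EReal.iSup_coe_eq_of_isGreatest {ι : Sort*} {f : ι → ℝ} {a : ℝ}
    (h : IsGreatest (Set.range f) a) : ⨆ i, (f i : EReal) = a := by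
  apply IsLUB.iSup_eq
  rw [Set.range_comp']
  exact (EReal.coe_strictMono.monotone.map_isGreatest h).isLUB

theorem mul_le_rpow_one_div_add {ν c t : ℝ} (hν0 : 0 < ν) (hν1 : ν < 1) (hc : 0 ≤ c)
    (ht : 0 ≤ t) :
    c * t ≤ t ^ (1 / ν) + (1 - ν) * (ν ^ ν * c) ^ (1 / (1 - ν)) := by
  have hνν : 0 < ν ^ ν := rpow_pos_of_pos hν0 ν
  have amgm := geom_mean_le_arith_mean2_weighted hν0.le (sub_nonneg.2 hν1.le)
    (rpow_nonneg (div_nonneg ht hνν.le) (1 / ν))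
    (rpow_nonneg (mul_nonneg hνν.le hc) (1 / (1 - ν))) (add_sub_cancel ν 1)
  have hgeom : ((t / ν ^ ν) ^ (1 / ν)) ^ ν * ((ν ^ ν * c) ^ (1 / (1 - ν))) ^ (1 - ν)
      = c * t := by
    rw [one_div, one_div, rpow_inv_rpow (div_nonneg ht hνν.le) hν0.ne',
      rpow_inv_rpow (mul_nonneg hνν.le hc) (by linarith)]
    field_simp
  have harith : ν * (t / ν ^ ν) ^ (1 / ν) = t ^ (1 / ν) := by
    rw [div_rpow ht hνν.le, one_div, rpow_rpow_inv hν0.le hν0.ne']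
    field_simp
  linarith

theorem mul_sub_rpow_one_div_eq_of_rpow_eq {ν c s : ℝ} (hν : 0 < ν) (hs : 0 ≤ s)
    (hcs : s ^ (1 - ν) = ν ^ ν * c) :
    c * (ν ^ ν * s ^ ν) - (ν ^ ν * s ^ ν) ^ (1 / ν) = (1 - ν) * s := by
  have hνν : 0 ≤ ν ^ ν := rpow_nonneg hν.le ν
  have hgain : c * (ν ^ ν * s ^ ν) = s := by
    calc c * (ν ^ ν * s ^ ν) = s ^ (1 - ν) * s ^ ν := by rw [hcs]; ring
      _ = s := by rw [← rpow_add' hs (by norm_num), sub_add_cancel, rpow_one]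
  rw [hgain, mul_rpow hνν (rpow_nonneg hs ν), one_div, rpow_rpow_inv hν.le hν.ne',
    rpow_rpow_inv hs hν.ne']
  ring

theorem isGreatest_range_mul_sub_rpow {ν c : ℝ} (hν0 : 0 < ν) (hν1 : ν < 1) (hc : 0 ≤ c) :
    IsGreatest (Set.range fun t : ℝ => c * t - if 0 ≤ t then t ^ (1 / ν) else 0)
      ((1 - ν) * (ν ^ ν * c) ^ (1 / (1 - ν))) := by
  have hνc : 0 ≤ ν ^ ν * c := mul_nonneg (rpow_nonneg hν0.le ν) hc
  have hcs : ((ν ^ ν * c) ^ (1 / (1 - ν))) ^ (1 - ν) = ν ^ ν * c := by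
    rw [one_div, rpow_inv_rpow hνc (by linarith)]
  have hs : 0 ≤ (ν ^ ν * c) ^ (1 / (1 - ν)) := rpow_nonneg hνc _
  set s := (ν ^ ν * c) ^ (1 / (1 - ν))
  refine ⟨⟨ν ^ ν * s ^ ν, ?_⟩, ?_⟩
  · dsimp only
    rw [if_pos (by positivity)]
    exact mul_sub_rpow_one_div_eq_of_rpow_eq hν0 hs hcs
  · rintro _ ⟨t, rfl⟩
    dsimp only
    split_ifs with ht
    · linarith [mul_le_rpow_one_div_add hν0 hν1 hc ht]
    · nlinarith

theorem rpow_div_one_sub_sub_rpow_mul {ν c : ℝ} (hν0 : 0 < ν) (hν1 : ν < 1) (hc : 0 ≤ c) :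
    (ν ^ (ν / (1 - ν)) - ν ^ (1 / (1 - ν))) * c ^ (1 / (1 - ν))
      = (1 - ν) * (ν ^ ν * c) ^ (1 / (1 - ν)) := by
  have hexp : ν ^ (1 / (1 - ν)) = ν ^ (ν / (1 - ν)) * ν := by
    rw [← rpow_add_one hν0.ne']
    congr 1
    field_simp [show 1 - ν ≠ 0 by linarith]
    ring
  rw [mul_rpow (rpow_nonneg hν0.le ν) hc, ← rpow_mul hν0.le, mul_one_div, hexp]
  ring

/-- If `x = c·m` for some `c ≥ 0`, then
`I_MD(x; m) = (ν^{ν/(1−ν)} − ν^{1/(1−ν)}) c^{1/(1−ν)}`. -/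
theorem IMD_eq_of_proportional
    {h : ℕ} {ν : ℝ} (hν : ν ∈ Set.Ioo (0 : ℝ) 1)
    (m : Fin h → ℝ) (hm : m ≠ 0) (x : Fin h → ℝ)
    (c : ℝ) (hc : 0 ≤ c) (hx : x = c • m) :
    IMD ν m x
      = (((ν ^ (ν / (1 - ν)) - ν ^ (1 / (1 - ν))) * c ^ (1 / (1 - ν)) : ℝ) : EReal) := by
  obtain ⟨hν0, hν1⟩ := hν
  rw [hx, IMD_smul_self ν hm c, rpow_div_one_sub_sub_rpow_mul hν0 hν1 hc]
  exact EReal.iSup_coe_eq_of_isGreatest (isGreatest_range_mul_sub_rpow hν0 hν1 hc)
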